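/- Let C be a chain complex of geometric modules over B with differentials of radius < δ, and suppose C admits a chain contraction of radius < δ over B \ W (i.e., dΓ + Γd = id holds on all basis elements located outside W^δ and Γ has radius < δ). Then the 'folded' differential (d ⊕ Γ) : C_even → C_odd, i.e., the map ⊕_k C_{2k} → ⊕_k C_{2k+1} ⊕ C_{2k-1} given by d + Γ in each degree, has radius < δ and admits an inverse of radius < (n+1)δ over B \ W^{(n+1)δ}, where n is the length of C. -/
import Mathlib


/-- A geometric module over `B`. -/
abbrev GMod (S : Type) : Type := S →₀ ℤ

/-- Radius of a homomorphism of geometric modules. -/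
def hasRadiusLT {B S S' : Type} [MetricSpace B] (p : S → B) (p' : S' → B)
    (φ : GMod S →+ GMod S') (δ : ℝ) : Prop :=
  ∀ (s : S) (t : S'), (φ (Finsupp.single s 1)) t ≠ 0 → dist (p s) (p' t) < δ

/-- The open `ε`-neighborhood of a subset of a metric space. -/
def epsNbhd {B : Type} [MetricSpace B] (V : Set B) (ε : ℝ) : Set B :=
  {b | ∃ v ∈ V, dist b v < ε}

/-- Embedding of the degree-`j` basis into the graded basis satisfying a parity
predicate `Q`. -/
def degEmb (S : ℤ → Type) (Q : ℤ → Prop) (j : ℤ) (hj : Q j) :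
    S j ↪ {x : Σ k : ℤ, S k // Q x.1} :=
  ⟨fun s => ⟨⟨j, s⟩, hj⟩, fun a b h => by
    have := congrArg Subtype.val h
    simpa using this⟩

/-- The induced map of geometric modules placing the degree-`j` module into the graded
sum. -/
noncomputable def degHom (S : ℤ → Type) (Q : ℤ → Prop) (j : ℤ) (hj : Q j) :
    GMod (S j) →+ GMod {x : Σ k : ℤ, S k // Q x.1} :=
  AddMonoidHom.mk' (fun g => Finsupp.embDomain (degEmb S Q j hj) g)
    (fun a b => Finsupp.embDomain_add _ _ _)

noncomputable section Folded
namespace Folded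

noncomputable def fromBasis {α : Type} {N : Type*} [AddCommGroup N] (f : α → N) : GMod α →+ N :=
  Finsupp.liftAddHom (fun a => (zmultiplesHom N) (f a))

@[simp] lemma fromBasis_single {α : Type} {N : Type*} [AddCommGroup N] (f : α → N) (a : α) :
    fromBasis f (Finsupp.single a 1) = f a := by
  simp [fromBasis]

lemma hom_eq_sum {α : Type} {N : Type*} [AddCommGroup N] (φ : GMod α →+ N) (v : GMod α) :
    φ v = v.sum (fun a c => c • φ (Finsupp.single a 1)) := by
  conv_lhs => rw [← Finsupp.sum_single v]
  rw [map_finsuppSum]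
  apply Finsupp.sum_congr
  intro a _
  rw [← map_zsmul, Finsupp.smul_single, smul_eq_mul, mul_one]

lemma ext_on {α : Type} {N : Type*} [AddCommGroup N] (φ ψ : GMod α →+ N) (V : Set α)
    (hV : ∀ a ∈ V, φ (Finsupp.single a 1) = ψ (Finsupp.single a 1))
    (v : GMod α) (hv : ∀ a ∈ v.support, a ∈ V) : φ v = ψ v := by
  rw [hom_eq_sum φ, hom_eq_sum ψ]
  apply Finsupp.sum_congr
  intro a ha
  rw [hV a (hv a ha)]

lemma hom_eq {α : Type} {N : Type*} [AddCommGroup N] (φ ψ : GMod α →+ N)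
    (h : ∀ a, φ (Finsupp.single a 1) = ψ (Finsupp.single a 1)) (v : GMod α) : φ v = ψ v :=
  ext_on φ ψ Set.univ (fun a _ => h a) v (fun _ _ => trivial)

lemma exists_of_apply_ne {α β : Type} (φ : GMod α →+ GMod β) (v : GMod α) (t : β)
    (h : φ v t ≠ 0) : ∃ a ∈ v.support, (φ (Finsupp.single a 1)) t ≠ 0 := by
  rw [hom_eq_sum] at h
  rw [Finsupp.sum, Finsupp.finset_sum_apply] at h
  by_contra hc
  push_neg at hc
  apply h
  apply Finset.sum_eq_zero
  intro a ha
  rw [Finsupp.smul_apply, hc a ha, smul_zero]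

variable {S : ℤ → Type}

def castGM {j k : ℤ} (h : j = k) : GMod (S j) →+ GMod (S k) := by
  subst h; exact AddMonoidHom.id _

def castS {j k : ℤ} (h : j = k) (s : S j) : S k := h ▸ s

lemma castGM_single {j k : ℤ} (h : j = k) (s : S j) :
    castGM (S := S) h (Finsupp.single s 1) = Finsupp.single (castS h s) 1 := by
  subst h; rfl

abbrev TS (S : ℤ → Type) : Type := Σ k : ℤ, S k

def ι (j : ℤ) : GMod (S j) →+ GMod (TS S) :=
  fromBasis (fun s => Finsupp.single ⟨j, s⟩ 1)

@[simp] lemma ι_single (j : ℤ) (s : S j) :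
    ι (S := S) j (Finsupp.single s 1) = Finsupp.single ⟨j, s⟩ 1 := fromBasis_single _ _

lemma ι_cast {m k : ℤ} (h : m = k) (v : GMod (S m)) :
    ι (S := S) m v = ι k (castGM h v) := by subst h; rfl

variable (d : ∀ k : ℤ, GMod (S (k + 1)) →+ GMod (S k))
variable (Γ : ∀ k : ℤ, GMod (S k) →+ GMod (S (k + 1)))

def Dop : GMod (TS S) →+ GMod (TS S) :=
  fromBasis (fun a => ι (a.1 - 1) (d (a.1 - 1)
    (castGM (show a.1 = (a.1 - 1) + 1 by omega) (Finsupp.single a.2 1))))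

def Hop : GMod (TS S) →+ GMod (TS S) :=
  fromBasis (fun a => ι (a.1 + 1) (Γ a.1 (Finsupp.single a.2 1)))

lemma Dop_single (j : ℤ) (s : S j) :
    Dop d (Finsupp.single ⟨j, s⟩ 1) =
      ι (j - 1) (d (j - 1) (castGM (show j = (j - 1) + 1 by omega) (Finsupp.single s 1))) :=
  fromBasis_single _ _

lemma Hop_single (j : ℤ) (s : S j) :
    Hop Γ (Finsupp.single ⟨j, s⟩ 1) = ι (j + 1) (Γ j (Finsupp.single s 1)) :=
  fromBasis_single _ _

lemma ι_d_cast {m k : ℤ} (h : m = k) (hc : k + 1 = m + 1) (v : GMod (S (k + 1))) :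
    ι (S := S) m (d m (castGM hc v)) = ι k (d k v) := by
  subst h; rfl

lemma Dop_ι (k : ℤ) (v : GMod (S (k + 1))) :
    Dop d (ι (k + 1) v) = ι k (d k v) := by
  refine hom_eq ((Dop d).comp (ι (k+1))) ((ι k).comp (d k)) (fun t => ?_) v
  show Dop d (ι (k+1) (Finsupp.single t 1)) = ι k (d k (Finsupp.single t 1))
  rw [ι_single, Dop_single]
  exact ι_d_cast d (show k + 1 - 1 = k by omega) _ _

lemma Hop_ι (k : ℤ) (v : GMod (S k)) :
    Hop Γ (ι k v) = ι (k + 1) (Γ k v) := by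
  refine hom_eq ((Hop Γ).comp (ι k)) ((ι (k+1)).comp (Γ k)) (fun t => ?_) v
  show Hop Γ (ι k (Finsupp.single t 1)) = ι (k+1) (Γ k (Finsupp.single t 1))
  rw [ι_single, Hop_single]

lemma dd_cast (hd2 : ∀ (k : ℤ) (x : GMod (S (k + 1 + 1))), d k (d (k + 1) x) = 0)
    {k m : ℤ} (hm : m = k + 1) (y : GMod (S (m + 1))) :
    d k (castGM hm (d m y)) = 0 := by
  subst hm; exact hd2 k y

lemma Dop_Dop (hd2 : ∀ (k : ℤ) (x : GMod (S (k + 1 + 1))), d k (d (k + 1) x) = 0)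
    (v : GMod (TS S)) : Dop d (Dop d v) = 0 := by
  refine hom_eq ((Dop d).comp (Dop d)) 0 (fun a => ?_) v
  obtain ⟨j, s⟩ := a
  show Dop d (Dop d (Finsupp.single ⟨j, s⟩ 1)) = 0
  rw [Dop_single, ι_cast (show j - 1 = (j-2) + 1 by omega), Dop_ι]
  rw [dd_cast d hd2, map_zero]

lemma DH_single (j : ℤ) (s : S j) :
    Dop d (Hop Γ (Finsupp.single ⟨j, s⟩ 1)) = ι j (d j (Γ j (Finsupp.single s 1))) := by
  rw [Hop_single, Dop_ι]

lemma ιΓd_cast {m k : ℤ} (h : m = k) (hc : k + 1 = m + 1) (v : GMod (S (k + 1))) :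
    ι (S := S) (m + 1) (Γ m (d m (castGM hc v))) = ι (k + 1) (Γ k (d k v)) := by
  subst h; rfl

lemma homot_single {B : Type} [MetricSpace B] (p : ∀ k, S k → B) (δ : ℝ) (W : Set B)
    (hΓ : ∀ (k : ℤ) (s : S (k + 1)), p (k + 1) s ∉ epsNbhd W δ →
      d (k + 1) (Γ (k + 1) (Finsupp.single s 1)) + Γ k (d k (Finsupp.single s 1)) =
        Finsupp.single s 1)
    (a : TS S) (ha : p a.1 a.2 ∉ epsNbhd W δ) :
    Dop d (Hop Γ (Finsupp.single a 1)) + Hop Γ (Dop d (Finsupp.single a 1)) =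
      Finsupp.single a 1 := by
  obtain ⟨j, s⟩ := a
  obtain ⟨k, rfl⟩ : ∃ k, j = k + 1 := ⟨j - 1, by omega⟩
  rw [DH_single, Dop_single, Hop_ι, ιΓd_cast d Γ (show k + 1 - 1 = k by omega),
    ← map_add, hΓ k s ha, ι_single]

lemma p_castS {B : Type} [MetricSpace B] (p : ∀ k, S k → B) {j k : ℤ} (h : j = k) (s : S j) :
    p k (castS h s) = p j s := by subst h; rfl

lemma ι_apply_ne {m : ℤ} (v : GMod (S m)) (t : TS S) (h : ι m v t ≠ 0) :
    ∃ u, t = ⟨m, u⟩ ∧ v u ≠ 0 := by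
  obtain ⟨a, ha, hne⟩ := exists_of_apply_ne (ι m) v t h
  refine ⟨a, ?_, Finsupp.mem_support_iff.mp ha⟩
  rw [ι_single] at hne
  by_contra hc
  exact hne (Finsupp.single_eq_of_ne (fun he => hc (he ▸ rfl)))

section WithB
variable {B : Type} [MetricSpace B] (p : ∀ k, S k → B) (δ : ℝ)

def P (a : TS S) : B := p a.1 a.2

lemma Dop_supp (hrad : ∀ k, ∀ (s : S (k+1)) (t : S k), (d k (Finsupp.single s 1)) t ≠ 0 →
      dist (p (k+1) s) (p k t) < δ)
    (a t : TS S) (h : Dop d (Finsupp.single a 1) t ≠ 0) :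
    dist (P p a) (P p t) < δ ∧ t.1 = a.1 - 1 := by
  obtain ⟨j, s⟩ := a
  rw [Dop_single, castGM_single] at h
  obtain ⟨u, rfl, hu⟩ := ι_apply_ne _ _ h
  refine ⟨?_, rfl⟩
  have := hrad (j - 1) (castS (show j = (j-1)+1 by omega) s) u hu
  rwa [p_castS p] at this

lemma Hop_supp (hΓrad : ∀ k, ∀ (s : S k) (t : S (k+1)), (Γ k (Finsupp.single s 1)) t ≠ 0 →
      dist (p k s) (p (k+1) t) < δ)
    (a t : TS S) (h : Hop Γ (Finsupp.single a 1) t ≠ 0) :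
    dist (P p a) (P p t) < δ ∧ t.1 = a.1 + 1 := by
  obtain ⟨j, s⟩ := a
  rw [Hop_single] at h
  obtain ⟨u, rfl, hu⟩ := ι_apply_ne _ _ h
  exact ⟨hΓrad j s u hu, rfl⟩

/-- All basis elements of the support satisfy `R`. -/
def SuppP (R : TS S → Prop) (v : GMod (TS S)) : Prop := ∀ a ∈ v.support, R a

lemma suppP_propagate (R R' : TS S → Prop) (φ : GMod (TS S) →+ GMod (TS S))
    (hφ : ∀ a, R a → ∀ t, (φ (Finsupp.single a 1)) t ≠ 0 → R' t)
    (v : GMod (TS S)) (hv : SuppP R v) : SuppP R' (φ v) := by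
  intro t ht
  obtain ⟨a, ha, hne⟩ := exists_of_apply_ne φ v t (Finsupp.mem_support_iff.mp ht)
  exact hφ a (hv a ha) t hne

lemma suppP_add (R : TS S → Prop) (v w : GMod (TS S)) (hv : SuppP R v) (hw : SuppP R w) :
    SuppP R (v + w) := by
  classical
  intro a ha
  rcases Finset.mem_union.mp (Finsupp.support_add ha) with h | h
  exacts [hv a h, hw a h]

lemma suppP_sum (R : TS S → Prop) {ι' : Type*} (s : Finset ι') (f : ι' → GMod (TS S))
    (h : ∀ i ∈ s, SuppP R (f i)) : SuppP R (∑ i ∈ s, f i) := by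
  intro a ha
  have := Finsupp.mem_support_iff.mp ha
  rw [Finsupp.finset_sum_apply] at this
  obtain ⟨i, hi, hne⟩ := Finset.exists_ne_zero_of_sum_ne_zero this
  exact h i hi a (Finsupp.mem_support_iff.mpr hne)

lemma suppP_zsmul (R : TS S → Prop) (c : ℤ) (v : GMod (TS S)) (hv : SuppP R v) :
    SuppP R (c • v) := by
  intro a ha
  apply hv
  rw [Finsupp.mem_support_iff] at ha ⊢
  intro h0
  exact ha (by rw [Finsupp.smul_apply, h0, smul_zero])

lemma suppP_zero (R : TS S → Prop) : SuppP R (0 : GMod (TS S)) := by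
  intro a ha; simp at ha

lemma suppP_single (R : TS S → Prop) (a : TS S) (h : R a) :
    SuppP R (Finsupp.single a 1) := by
  intro b hb
  rw [Finsupp.support_single_ne_zero _ one_ne_zero, Finset.mem_singleton] at hb
  rwa [hb]

end WithB

section Main
variable {B : Type} [MetricSpace B] (p : ∀ k, S k → B) (δ : ℝ) (W : Set B)

lemma not_nbhd_of_dist {b c : B} {ε ε' δ0 : ℝ} (hb : b ∉ epsNbhd W ε)
    (hd : dist b c < δ0) (hle : ε' + δ0 ≤ ε) : c ∉ epsNbhd W ε' := by
  rintro ⟨w, hw, hcw⟩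
  exact hb ⟨w, hw, by
    calc dist b w ≤ dist b c + dist c w := dist_triangle _ _ _
      _ < δ0 + ε' := by linarith
      _ ≤ ε := by linarith⟩

/-- `v` is located outside the `ε`-neighborhood of `W`. -/
def LocOut (ε : ℝ) (v : GMod (TS S)) : Prop :=
  ∀ a ∈ v.support, P p a ∉ epsNbhd W ε

lemma locOut_mono {ε ε' : ℝ} (h : ε' ≤ ε) {v : GMod (TS S)} (hv : LocOut p W ε v) :
    LocOut p W ε' v := by
  intro a ha
  intro ⟨w, hw, hc⟩
  exact hv a ha ⟨w, hw, lt_of_lt_of_le hc h⟩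

variable (hrad : ∀ k, ∀ (s : S (k+1)) (t : S k), (d k (Finsupp.single s 1)) t ≠ 0 →
      dist (p (k+1) s) (p k t) < δ)
variable (hΓrad : ∀ k, ∀ (s : S k) (t : S (k+1)), (Γ k (Finsupp.single s 1)) t ≠ 0 →
      dist (p k s) (p (k+1) t) < δ)

include hrad in
lemma loc_D {ε ε' : ℝ} (hle : ε' + δ ≤ ε) {v : GMod (TS S)} (hv : LocOut p W ε v) :
    LocOut p W ε' (Dop d v) := by
  refine suppP_propagate _ _ _ (fun a ha t ht => ?_) v hv
  exact not_nbhd_of_dist W ha (Dop_supp d p δ hrad a t ht).1 hle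

include hΓrad in
lemma loc_H {ε ε' : ℝ} (hle : ε' + δ ≤ ε) {v : GMod (TS S)} (hv : LocOut p W ε v) :
    LocOut p W ε' (Hop Γ v) := by
  refine suppP_propagate _ _ _ (fun a ha t ht => ?_) v hv
  exact not_nbhd_of_dist W ha (Hop_supp Γ p δ hΓrad a t ht).1 hle

end Main

def Hpow : ℕ → (GMod (TS S) →+ GMod (TS S))
  | 0 => AddMonoidHom.id _
  | (m+1) => (Hop Γ).comp (Hpow m)

@[simp] lemma Hpow_zero (v : GMod (TS S)) : Hpow Γ 0 v = v := rfl

lemma Hpow_succ (m : ℕ) (v : GMod (TS S)) : Hpow Γ (m+1) v = Hop Γ (Hpow Γ m v) := rfl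

lemma Hpow_comm (m : ℕ) (v : GMod (TS S)) : Hpow Γ m (Hop Γ v) = Hop Γ (Hpow Γ m v) := by
  induction m with
  | zero => rfl
  | succ m ih => rw [Hpow_succ, Hpow_succ, ih]

lemma Hpow_HH (m : ℕ) (v : GMod (TS S)) :
    Hpow Γ m (Hop Γ (Hop Γ v)) = Hpow Γ (m+2) v := by
  rw [Hpow_comm, Hpow_comm, Hpow_succ, Hpow_succ]

section Main2
variable {B : Type} [MetricSpace B] (p : ∀ k, S k → B) (δ : ℝ) (W : Set B)
variable (hΓrad : ∀ k, ∀ (s : S k) (t : S (k+1)), (Γ k (Finsupp.single s 1)) t ≠ 0 →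
      dist (p k s) (p (k+1) t) < δ)

include hΓrad in
lemma loc_Hpow {ε : ℝ} (m : ℕ) {ε' : ℝ} (hle : ε' + (m : ℝ) * δ ≤ ε) {v : GMod (TS S)}
    (hv : LocOut p W ε v) : LocOut p W ε' (Hpow Γ m v) := by
  induction m generalizing ε' with
  | zero => exact locOut_mono p W (by push_cast at hle; linarith) hv
  | succ m ih =>
      rw [Hpow_succ]
      refine loc_H Γ p δ W hΓrad (ε := ε' + δ) le_rfl ?_
      refine ih (ε' := ε' + δ) ?_
      push_cast at hle ⊢
      linarith

end Main2

section Deg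
variable (n : ℕ) (hlen : ∀ k : ℤ, (k < 0 ∨ (n : ℤ) < k) → IsEmpty (S k))

include hlen in
lemma deg_bound (a : TS S) : 0 ≤ a.1 ∧ a.1 ≤ (n : ℤ) := by
  by_contra hc
  exact (hlen a.1 (by omega)).false a.2

end Deg

lemma Hop_deg (a t : TS S) (h : Hop Γ (Finsupp.single a 1) t ≠ 0) : t.1 = a.1 + 1 := by
  obtain ⟨j, s⟩ := a
  rw [Hop_single] at h
  obtain ⟨u, rfl, hu⟩ := ι_apply_ne _ _ h
  rfl

lemma Dop_deg (a t : TS S) (h : Dop d (Finsupp.single a 1) t ≠ 0) : t.1 = a.1 - 1 := by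
  obtain ⟨j, s⟩ := a
  rw [Dop_single] at h
  obtain ⟨u, rfl, hu⟩ := ι_apply_ne _ _ h
  rfl

lemma suppP_Hop (Q Q' : ℤ → Prop) (hQ : ∀ k, Q k → Q' (k + 1)) (v : GMod (TS S))
    (hv : SuppP (fun a => Q a.1) v) : SuppP (fun a => Q' a.1) (Hop Γ v) := by
  refine suppP_propagate _ _ _ (fun a ha t ht => ?_) v hv
  rw [Hop_deg Γ a t ht]
  exact hQ _ ha

lemma suppP_Dop (Q Q' : ℤ → Prop) (hQ : ∀ k, Q k → Q' (k - 1)) (v : GMod (TS S))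
    (hv : SuppP (fun a => Q a.1) v) : SuppP (fun a => Q' a.1) (Dop d v) := by
  refine suppP_propagate _ _ _ (fun a ha t ht => ?_) v hv
  rw [Dop_deg d a t ht]
  exact hQ _ ha

lemma suppP_Hpow_ge (m j : ℕ) (v : GMod (TS S))
    (hv : SuppP (fun a => (j : ℤ) ≤ a.1) v) :
    SuppP (fun a => (j : ℤ) + m ≤ a.1) (Hpow Γ m v) := by
  induction m generalizing v with
  | zero => simpa using hv
  | succ m ih =>
      rw [show ((j : ℤ) + (m+1 : ℕ)) = ((j : ℤ) + m) + 1 by push_cast; ring]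
      intro a ha
      have := suppP_Hop Γ (fun k => (j:ℤ) + m ≤ k) (fun k => (j:ℤ) + m + 1 ≤ k)
        (fun k hk => by omega) (Hpow Γ m v) (ih v hv) a ha
      exact this

section Core
variable {B : Type} [MetricSpace B] (p : ∀ k, S k → B) (n : ℕ) (δ : ℝ) (W : Set B)
variable (hδ : 0 < δ)
variable (hlen : ∀ k : ℤ, (k < 0 ∨ (n : ℤ) < k) → IsEmpty (S k))
variable (hd2 : ∀ (k : ℤ) (x : GMod (S (k + 1 + 1))), d k (d (k + 1) x) = 0)
variable (hrad : ∀ k, ∀ (s : S (k+1)) (t : S k), (d k (Finsupp.single s 1)) t ≠ 0 →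
      dist (p (k+1) s) (p k t) < δ)
variable (hΓrad : ∀ k, ∀ (s : S k) (t : S (k+1)), (Γ k (Finsupp.single s 1)) t ≠ 0 →
      dist (p k s) (p (k+1) t) < δ)
variable (hΓ : ∀ (k : ℤ) (s : S (k + 1)), p (k + 1) s ∉ epsNbhd W δ →
      d (k + 1) (Γ (k + 1) (Finsupp.single s 1)) + Γ k (d k (Finsupp.single s 1)) =
        Finsupp.single s 1)

include hlen in
lemma Hpow_eq_zero (m : ℕ) (hm : (n : ℤ) < (m : ℤ)) (v : GMod (TS S)) :
    Hpow Γ m v = 0 := by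
  have h0 : SuppP (fun a : TS S => (0 : ℤ) ≤ a.1) v := fun a _ => (deg_bound n hlen a).1
  have hd := suppP_Hpow_ge Γ m 0 v h0
  ext a
  by_contra hc
  have ha := Finsupp.mem_support_iff.mpr (by simpa using hc)
  have h1 := hd a ha
  have h2 := (deg_bound n hlen a).2
  omega

include hΓ in
lemma homot (v : GMod (TS S)) (hv : LocOut p W δ v) :
    Dop d (Hop Γ v) + Hop Γ (Dop d v) = v := by
  have := ext_on (((Dop d).comp (Hop Γ)) + ((Hop Γ).comp (Dop d))) (AddMonoidHom.id _)
    {a | P p a ∉ epsNbhd W δ}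
    (fun a ha => by
      simpa [AddMonoidHom.add_apply] using homot_single d Γ p δ W hΓ a ha) v hv
  simpa [AddMonoidHom.add_apply] using this

include hδ hΓ hrad hΓrad in
lemma comm1 (v : GMod (TS S)) (hv : LocOut p W (2*δ) v) :
    Dop d (Hop Γ (Hop Γ v)) = Hop Γ (Hop Γ (Dop d v)) := by
  have h1 : LocOut p W δ (Hop Γ v) :=
    loc_H Γ p δ W hΓrad (by linarith) hv
  have hv' : LocOut p W δ v := locOut_mono p W (by linarith) hv
  have e1 := homot d Γ p δ W hΓ (Hop Γ v) h1
  have e2 := homot d Γ p δ W hΓ v hv'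
  have h2 : Dop d (Hop Γ v) = v - Hop Γ (Dop d v) := eq_sub_of_add_eq e2
  have h3 : Dop d (Hop Γ (Hop Γ v)) = Hop Γ v - Hop Γ (Dop d (Hop Γ v)) :=
    eq_sub_of_add_eq e1
  rw [h3, h2, map_sub]
  abel

include hδ hΓ hrad hΓrad in
lemma comm2 (i : ℕ) (v : GMod (TS S)) (hv : LocOut p W ((2*(i:ℝ))*δ) v) :
    Dop d (Hpow Γ (2*i) v) = Hpow Γ (2*i) (Dop d v) := by
  induction i generalizing v with
  | zero => rfl
  | succ i ih =>
      have hv2 : LocOut p W ((2*(i:ℝ)+2)*δ) v := by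
        refine locOut_mono p W (le_of_eq ?_) hv
        push_cast; ring
      have h2i : 2*(i+1) = 2*i+1+1 := by ring
      rw [h2i, Hpow_succ, Hpow_succ]
      have hu : LocOut p W (2*δ) (Hpow Γ (2*i) v) := by
        refine loc_Hpow Γ p δ W hΓrad (2*i) (ε := (2*(i:ℝ)+2)*δ) ?_ hv2
        push_cast; linarith
      rw [comm1 d Γ p δ W hδ hrad hΓrad hΓ _ hu]
      have hv' : LocOut p W (2*(i:ℝ)*δ) v := by
        refine locOut_mono p W ?_ hv2
        nlinarith [Nat.cast_nonneg (α := ℝ) i, hδ.le]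
      rw [ih v hv']
      rfl

end Core

lemma telescope {M : Type*} [AddCommGroup M] (f : ℕ → M) (N : ℕ) :
    ∑ i ∈ Finset.range (N+1), ((-1:ℤ)^i) • (f i + f (i+1)) =
      f 0 + ((-1:ℤ)^N) • f (N+1) := by
  induction N with
  | zero => simp
  | succ N ih =>
      have h : ((-1:ℤ)^(N+1)) = -((-1:ℤ)^N) := by ring
      rw [Finset.sum_range_succ, ih, h, smul_add, neg_smul, neg_smul]
      abel

def Aop : GMod (TS S) →+ GMod (TS S) := Dop d + Hop Γ

lemma Aop_apply (v : GMod (TS S)) : Aop d Γ v = Dop d v + Hop Γ v := rfl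

def G0 (n : ℕ) : GMod (TS S) →+ GMod (TS S) :=
  AddMonoidHom.mk' (fun v => ∑ i ∈ Finset.range (n+1), ((-1:ℤ)^i) • Hpow Γ (2*i) v)
    (by
      intro a b
      rw [← Finset.sum_add_distrib]
      apply Finset.sum_congr rfl
      intro i _
      rw [map_add, smul_add])

lemma G0_apply (n : ℕ) (v : GMod (TS S)) :
    G0 Γ n v = ∑ i ∈ Finset.range (n+1), ((-1:ℤ)^i) • Hpow Γ (2*i) v := rfl

section Core2
variable {B : Type} [MetricSpace B] (p : ∀ k, S k → B) (n : ℕ) (δ : ℝ) (W : Set B)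
variable (hδ : 0 < δ)
variable (hlen : ∀ k : ℤ, (k < 0 ∨ (n : ℤ) < k) → IsEmpty (S k))
variable (hd2 : ∀ (k : ℤ) (x : GMod (S (k + 1 + 1))), d k (d (k + 1) x) = 0)
variable (hrad : ∀ k, ∀ (s : S (k+1)) (t : S k), (d k (Finsupp.single s 1)) t ≠ 0 →
      dist (p (k+1) s) (p k t) < δ)
variable (hΓrad : ∀ k, ∀ (s : S k) (t : S (k+1)), (Γ k (Finsupp.single s 1)) t ≠ 0 →
      dist (p k s) (p (k+1) t) < δ)
variable (hΓ : ∀ (k : ℤ) (s : S (k + 1)), p (k + 1) s ∉ epsNbhd W δ →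
      d (k + 1) (Γ (k + 1) (Finsupp.single s 1)) + Γ k (d k (Finsupp.single s 1)) =
        Finsupp.single s 1)

include hrad hΓrad in
lemma loc_A {ε ε' : ℝ} (hle : ε' + δ ≤ ε) {v : GMod (TS S)} (hv : LocOut p W ε v) :
    LocOut p W ε' (Aop d Γ v) := by
  rw [Aop_apply]
  exact suppP_add _ _ _ (loc_D d p δ W hrad hle hv) (loc_H Γ p δ W hΓrad hle hv)

include hlen hd2 hΓ in
lemma sum1 (v : GMod (TS S)) (hv : LocOut p W δ v) :
    G0 Γ n (Aop d Γ (Aop d Γ v)) = v := by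
  have hAA : Aop d Γ (Aop d Γ v) = v + Hop Γ (Hop Γ v) := by
    rw [Aop_apply, Aop_apply, map_add, map_add, Dop_Dop d hd2]
    have := homot d Γ p δ W hΓ v hv
    rw [zero_add, ← add_assoc, this]
  rw [hAA, G0_apply]
  have hterm : ∀ i, Hpow Γ (2*i) (v + Hop Γ (Hop Γ v)) =
      Hpow Γ (2*i) v + Hpow Γ (2*(i+1)) v := by
    intro i
    rw [map_add, Hpow_HH, show 2*i+2 = 2*(i+1) by ring]
  calc ∑ i ∈ Finset.range (n+1), ((-1:ℤ)^i) • Hpow Γ (2*i) (v + Hop Γ (Hop Γ v))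
      = ∑ i ∈ Finset.range (n+1), ((-1:ℤ)^i) •
          ((fun j => Hpow Γ (2*j) v) i + (fun j => Hpow Γ (2*j) v) (i+1)) := by
        apply Finset.sum_congr rfl
        intro i _
        rw [hterm]
    _ = (fun j => Hpow Γ (2*j) v) 0 + ((-1:ℤ)^n) • (fun j => Hpow Γ (2*j) v) (n+1) :=
        telescope _ n
    _ = v := by
        simp only []
        rw [Hpow_eq_zero Γ n hlen (2*(n+1)) (by push_cast; omega) v, smul_zero, add_zero]
        exact Hpow_zero Γ v

include hδ hlen hd2 hrad hΓrad hΓ in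
lemma inv2 (w : GMod (TS S)) (hw : LocOut p W (((n:ℝ)+1)*δ) w) :
    Aop d Γ (G0 Γ n (Aop d Γ w)) = w := by
  have hn0 : (0:ℝ) ≤ (n:ℝ) := Nat.cast_nonneg n
  have hwδ : LocOut p W δ w := locOut_mono p W (by nlinarith) hw
  rw [G0_apply, map_sum]
  have hterm : ∀ i ∈ Finset.range (n+1),
      Aop d Γ (((-1:ℤ)^i) • Hpow Γ (2*i) (Aop d Γ w)) =
      ((-1:ℤ)^i) • Hpow Γ (2*i) (Aop d Γ (Aop d Γ w)) := by
    intro i hi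
    rw [map_zsmul]
    congr 1
    by_cases h2i : 2*i ≤ n
    · have hAw : LocOut p W (2*(i:ℝ)*δ) (Aop d Γ w) := by
        refine loc_A d Γ p δ W hrad hΓrad (ε := ((n:ℝ)+1)*δ) ?_ hw
        have : (2*(i:ℝ)+1) ≤ (n:ℝ)+1 := by
          have : (2*i : ℕ) ≤ n := h2i
          have := Nat.cast_le (α := ℝ) |>.mpr this
          push_cast at this ⊢
          linarith
        nlinarith
      rw [Aop_apply, comm2 d Γ p δ W hδ hrad hΓrad hΓ i _ hAw, ← Hpow_comm,
        ← map_add, ← Aop_apply]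
    · have hz : ∀ x : GMod (TS S), Hpow Γ (2*i) x = 0 :=
        fun x => Hpow_eq_zero Γ n hlen (2*i) (by push_cast; omega) x
      rw [hz, hz, map_zero]
  rw [Finset.sum_congr rfl hterm]
  have : ∑ i ∈ Finset.range (n+1), ((-1:ℤ)^i) • Hpow Γ (2*i) (Aop d Γ (Aop d Γ w)) =
      G0 Γ n (Aop d Γ (Aop d Γ w)) := (G0_apply Γ n _).symm
  rw [this]
  exact sum1 d Γ p n δ W hlen hd2 hΓ w hwδ

end Core2

open Classical in
def πQ (Q : ℤ → Prop) : GMod (TS S) →+ GMod {x : TS S // Q x.1} :=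
  fromBasis (fun a => if h : Q a.1 then Finsupp.single ⟨a, h⟩ 1 else 0)

def ιQ (Q : ℤ → Prop) : GMod {x : TS S // Q x.1} →+ GMod (TS S) :=
  fromBasis (fun x => Finsupp.single x.1 1)

@[simp] lemma ιQ_single (Q : ℤ → Prop) (x : {x : TS S // Q x.1}) :
    ιQ Q (Finsupp.single x 1) = Finsupp.single x.1 1 := fromBasis_single _ _

lemma πQ_single_of (Q : ℤ → Prop) (a : TS S) (h : Q a.1) :
    πQ Q (Finsupp.single a 1) = Finsupp.single ⟨a, h⟩ 1 := by
  rw [πQ, fromBasis_single, dif_pos h]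

lemma πQ_ιQ (Q : ℤ → Prop) (v : GMod {x : TS S // Q x.1}) : πQ Q (ιQ Q v) = v := by
  refine hom_eq ((πQ Q).comp (ιQ Q)) (AddMonoidHom.id _) (fun x => ?_) v
  show πQ Q (ιQ Q (Finsupp.single x 1)) = Finsupp.single x 1
  rw [ιQ_single, πQ_single_of Q x.1 x.2]

lemma ιQ_πQ (Q : ℤ → Prop) (w : GMod (TS S)) (hw : SuppP (fun a => Q a.1) w) :
    ιQ Q (πQ Q w) = w := by
  refine ext_on ((ιQ Q).comp (πQ Q)) (AddMonoidHom.id _) {a | Q a.1}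
    (fun a ha => ?_) w hw
  show ιQ Q (πQ Q (Finsupp.single a 1)) = Finsupp.single a 1
  rw [πQ_single_of Q a ha, ιQ_single]

lemma suppP_πQ (Q : ℤ → Prop) (R : TS S → Prop) (w : GMod (TS S)) (hw : SuppP R w) :
    ∀ x ∈ (πQ Q w).support, R x.1 := by
  intro x hx
  obtain ⟨a, ha, hne⟩ := exists_of_apply_ne (πQ Q) w x (Finsupp.mem_support_iff.mp hx)
  rw [πQ, fromBasis_single] at hne
  by_cases h : Q a.1
  · rw [dif_pos h] at hne
    have hxa : x = ⟨a, h⟩ := by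
      by_contra hc
      exact hne (Finsupp.single_eq_of_ne (fun he => hc (he ▸ rfl)))
    rw [hxa]
    exact hw a ha
  · rw [dif_neg h] at hne
    simp at hne

lemma πQ_ι (Q : ℤ → Prop) (m : ℤ) (hm : Q m) (v : GMod (S m)) :
    πQ Q (ι m v) = degHom S Q m hm v := by
  refine hom_eq ((πQ Q).comp (ι m)) (degHom S Q m hm) (fun t => ?_) v
  show πQ Q (ι m (Finsupp.single t 1)) = degHom S Q m hm (Finsupp.single t 1)
  rw [ι_single, πQ_single_of Q ⟨m, t⟩ hm]
  show _ = Finsupp.embDomain (degEmb S Q m hm) (Finsupp.single t 1)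
  rw [Finsupp.embDomain_single]
  rfl


lemma suppP_HH (Q : ℤ → Prop) (hQ : ∀ k, Q k → Q (k + 2)) (v : GMod (TS S))
    (hv : SuppP (fun a => Q a.1) v) : SuppP (fun a => Q a.1) (Hop Γ (Hop Γ v)) := by
  have h1 := suppP_Hop Γ Q (fun k => Q (k - 1)) (fun k hk => by
    show Q (k + 1 - 1)
    have h : k + 1 - 1 = k := by omega
    rw [h]; exact hk) v hv
  refine suppP_Hop Γ (fun k => Q (k - 1)) Q (fun k hk => ?_) _ h1
  show Q (k + 1)
  have h : k + 1 = (k - 1) + 2 := by omega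
  rw [h]; exact hQ _ hk

lemma suppP_Hpow2 (Q : ℤ → Prop) (hQ : ∀ k, Q k → Q (k + 2)) (i : ℕ) (v : GMod (TS S))
    (hv : SuppP (fun a => Q a.1) v) : SuppP (fun a => Q a.1) (Hpow Γ (2*i) v) := by
  induction i generalizing v with
  | zero => exact hv
  | succ i ih =>
      rw [show 2*(i+1) = 2*i+2 by ring, ← Hpow_HH]
      exact ih _ (suppP_HH Γ Q hQ v hv)

section NearSec
variable {B : Type} [MetricSpace B] (p : ∀ k, S k → B) (δ : ℝ)
variable (hrad : ∀ k, ∀ (s : S (k+1)) (t : S k), (d k (Finsupp.single s 1)) t ≠ 0 →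
      dist (p (k+1) s) (p k t) < δ)
variable (hΓrad : ∀ k, ∀ (s : S k) (t : S (k+1)), (Γ k (Finsupp.single s 1)) t ≠ 0 →
      dist (p k s) (p (k+1) t) < δ)

include hΓrad in
lemma near_H (b : B) (ε : ℝ) (v : GMod (TS S))
    (hv : SuppP (fun a => dist b (P p a) < ε) v) :
    SuppP (fun a => dist b (P p a) < ε + δ) (Hop Γ v) := by
  refine suppP_propagate _ _ _ (fun a ha t ht => ?_) v hv
  have := (Hop_supp Γ p δ hΓrad a t ht).1
  calc dist b (P p t) ≤ dist b (P p a) + dist (P p a) (P p t) := dist_triangle _ _ _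
    _ < ε + δ := by linarith

include hrad in
lemma near_D (b : B) (ε : ℝ) (v : GMod (TS S))
    (hv : SuppP (fun a => dist b (P p a) < ε) v) :
    SuppP (fun a => dist b (P p a) < ε + δ) (Dop d v) := by
  refine suppP_propagate _ _ _ (fun a ha t ht => ?_) v hv
  have := (Dop_supp d p δ hrad a t ht).1
  calc dist b (P p t) ≤ dist b (P p a) + dist (P p a) (P p t) := dist_triangle _ _ _
    _ < ε + δ := by linarith

include hrad hΓrad in
lemma near_A (b : B) (ε : ℝ) (v : GMod (TS S))
    (hv : SuppP (fun a => dist b (P p a) < ε) v) :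
    SuppP (fun a => dist b (P p a) < ε + δ) (Aop d Γ v) := by
  rw [Aop_apply]
  exact suppP_add _ _ _ (near_D d p δ hrad b ε v hv) (near_H Γ p δ hΓrad b ε v hv)

include hΓrad in
lemma near_Hpow (b : B) (ε : ℝ) (m : ℕ) (v : GMod (TS S))
    (hv : SuppP (fun a => dist b (P p a) < ε) v) :
    SuppP (fun a => dist b (P p a) < ε + (m:ℝ)*δ) (Hpow Γ m v) := by
  induction m generalizing v ε with
  | zero => simpa using hv
  | succ m ih =>
      rw [Hpow_succ]
      have := near_H Γ p δ hΓrad b (ε + (m:ℝ)*δ) _ (ih ε v hv)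
      refine fun a ha => ?_
      have h2 := this a ha
      push_cast
      push_cast at h2
      linarith

include hrad hΓrad in
lemma near_A_single (a : TS S) :
    SuppP (fun t => dist (P p a) (P p t) < δ) (Aop d Γ (Finsupp.single a 1)) := by
  rw [Aop_apply]
  refine suppP_add _ _ _ (fun t ht => ?_) (fun t ht => ?_)
  · exact (Dop_supp d p δ hrad a t (Finsupp.mem_support_iff.mp ht)).1
  · exact (Hop_supp Γ p δ hΓrad a t (Finsupp.mem_support_iff.mp ht)).1

end NearSec

lemma degHom_d_cast {m k : ℤ} (h : m = k) (hm : Odd m) (hk : Odd k) (hc : k + 1 = m + 1)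
    (v : GMod (S (k+1))) :
    degHom S Odd m hm (d m (castGM hc v)) = degHom S Odd k hk (d k v) := by
  subst h; rfl

lemma epsNbhd_mono {B : Type} [MetricSpace B] (W : Set B) {ε ε' : ℝ} (h : ε ≤ ε') :
    epsNbhd W ε ⊆ epsNbhd W ε' := by
  rintro b ⟨w, hw, hb⟩
  exact ⟨w, hw, lt_of_lt_of_le hb h⟩

end Folded

open Folded

/-- for a chain complex of geometric modules over `B` of length `n`, with
differentials of radius `< δ` and a chain contraction `Γ` of radius `< δ` over `B \ W`,
the folded differential `d ⊕ Γ : C_even → C_odd` has radius `< δ` and admits an inverse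
of radius `< (n+1)δ` over `B \ W^{(n+1)δ}`. -/
theorem folded_differential_invertible {B : Type} [MetricSpace B]
    (S : ℤ → Type) (p : ∀ k, S k → B) (n : ℕ)
    (hlen : ∀ k : ℤ, (k < 0 ∨ (n : ℤ) < k) → IsEmpty (S k))
    (d : ∀ k : ℤ, GMod (S (k + 1)) →+ GMod (S k))
    (hd2 : ∀ (k : ℤ) (x : GMod (S (k + 1 + 1))), d k (d (k + 1) x) = 0)
    (δ : ℝ) (hδ : 0 < δ) (W : Set B)
    (hrad : ∀ k, hasRadiusLT (p (k + 1)) (p k) (d k) δ)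
    (Γ : ∀ k : ℤ, GMod (S k) →+ GMod (S (k + 1)))
    (hΓrad : ∀ k, hasRadiusLT (p k) (p (k + 1)) (Γ k) δ)
    (hΓ : ∀ (k : ℤ) (s : S (k + 1)), p (k + 1) s ∉ epsNbhd W δ →
      d (k + 1) (Γ (k + 1) (Finsupp.single s 1)) + Γ k (d k (Finsupp.single s 1)) =
        Finsupp.single s 1)
    (F : GMod {x : Σ k : ℤ, S k // Even x.1} →+ GMod {x : Σ k : ℤ, S k // Odd x.1})
    (hF : ∀ (k : ℤ) (hk : Even (k + 1)) (s : S (k + 1)),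
      F (Finsupp.single ⟨⟨k + 1, s⟩, hk⟩ 1) =
        degHom S Odd k (Int.not_even_iff_odd.mp (Int.even_add_one.mp hk))
            (d k (Finsupp.single s 1)) +
        degHom S Odd (k + 1 + 1)
            (by obtain ⟨m, hm⟩ := Int.not_even_iff_odd.mp (Int.even_add_one.mp hk); exact ⟨m + 1, by omega⟩)
            (Γ (k + 1) (Finsupp.single s 1))) :
    hasRadiusLT (fun x : {x : Σ k : ℤ, S k // Even x.1} => p x.1.1 x.1.2)
        (fun x : {x : Σ k : ℤ, S k // Odd x.1} => p x.1.1 x.1.2) F δ ∧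
    ∃ G : GMod {x : Σ k : ℤ, S k // Odd x.1} →+ GMod {x : Σ k : ℤ, S k // Even x.1},
      hasRadiusLT (fun x : {x : Σ k : ℤ, S k // Odd x.1} => p x.1.1 x.1.2)
        (fun x : {x : Σ k : ℤ, S k // Even x.1} => p x.1.1 x.1.2) G (((n : ℝ) + 1) * δ) ∧
      (∀ x : {x : Σ k : ℤ, S k // Even x.1}, p x.1.1 x.1.2 ∉ epsNbhd W (((n : ℝ) + 1) * δ) →
        G (F (Finsupp.single x 1)) = Finsupp.single x 1) ∧
      (∀ y : {x : Σ k : ℤ, S k // Odd x.1}, p y.1.1 y.1.2 ∉ epsNbhd W (((n : ℝ) + 1) * δ) →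
        F (G (Finsupp.single y 1)) = Finsupp.single y 1) := by
  have hrad' : ∀ k, ∀ (s : S (k+1)) (t : S k), (d k (Finsupp.single s 1)) t ≠ 0 →
      dist (p (k+1) s) (p k t) < δ := hrad
  have hΓrad' : ∀ k, ∀ (s : S k) (t : S (k+1)), (Γ k (Finsupp.single s 1)) t ≠ 0 →
      dist (p k s) (p (k+1) t) < δ := hΓrad
  have hδn : δ ≤ ((n:ℝ)+1)*δ := by nlinarith [Nat.cast_nonneg (α := ℝ) n]
  -- parity flips
  have heo1 : ∀ k : ℤ, Even k → Odd (k - 1) := fun k ⟨r, hr⟩ => ⟨r - 1, by omega⟩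
  have heo2 : ∀ k : ℤ, Even k → Odd (k + 1) := fun k ⟨r, hr⟩ => ⟨r, by omega⟩
  have hoe1 : ∀ k : ℤ, Odd k → Even (k - 1) := fun k ⟨r, hr⟩ => ⟨r, by omega⟩
  have hoe2 : ∀ k : ℤ, Odd k → Even (k + 1) := fun k ⟨r, hr⟩ => ⟨r + 1, by omega⟩
  -- F agrees with the folded operator
  have hFA : ∀ (x : {x : Σ k : ℤ, S k // Even x.1}),
      F (Finsupp.single x 1) = πQ Odd (Aop d Γ (Finsupp.single x.1 1)) := by
    intro x
    obtain ⟨⟨j, s⟩, hj⟩ := x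
    obtain ⟨k, rfl⟩ : ∃ k, j = k + 1 := ⟨j - 1, by omega⟩
    rw [hF k hj s]
    have ho1 : Odd (k + 1 - 1) := heo1 _ hj
    have ho1' : Odd k := by
      have : k + 1 - 1 = k := by omega
      rwa [this] at ho1
    have ho2 : Odd (k + 1 + 1) := heo2 _ hj
    rw [Aop_apply, Dop_single, Hop_single, map_add, πQ_ι Odd (k + 1 - 1) ho1,
      πQ_ι Odd (k + 1 + 1) ho2,
      degHom_d_cast d (show k + 1 - 1 = k by omega) ho1 ho1']
  have F_all : ∀ v, F v = πQ Odd (Aop d Γ (ιQ Even v)) := by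
    intro v
    refine hom_eq F ((πQ Odd).comp ((Aop d Γ).comp (ιQ Even))) (fun x => ?_) v
    rw [hFA x]
    show _ = πQ Odd (Aop d Γ (ιQ Even (Finsupp.single x 1)))
    rw [ιQ_single]
  refine ⟨?_, ((πQ Even).comp ((G0 Γ n).comp ((Aop d Γ).comp (ιQ Odd)))), ?_, ?_, ?_⟩
  · -- radius of F
    intro x t h
    rw [hFA x] at h
    exact suppP_πQ Odd (fun t' => dist (P p x.1) (P p t') < δ) _
      (near_A_single d Γ p δ hrad' hΓrad' x.1) t (Finsupp.mem_support_iff.mpr h)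
  · -- radius of G
    intro y t h
    have hGy : ((πQ Even).comp ((G0 Γ n).comp ((Aop d Γ).comp (ιQ Odd))))
        (Finsupp.single y 1) = πQ Even (G0 Γ n (Aop d Γ (Finsupp.single y.1 1))) := by
      show πQ Even (G0 Γ n (Aop d Γ (ιQ Odd (Finsupp.single y 1)))) = _
      rw [ιQ_single]
    rw [hGy] at h
    have hsup : SuppP (fun a => dist (P p y.1) (P p a) < ((n:ℝ)+1)*δ)
        (G0 Γ n (Aop d Γ (Finsupp.single y.1 1))) := by
      rw [G0_apply]
      refine suppP_sum _ _ _ (fun i hi => suppP_zsmul _ _ _ ?_)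
      by_cases h2i : 2*i ≤ n
      · have base := near_A_single d Γ p δ hrad' hΓrad' y.1
        have hnear := near_Hpow Γ p δ hΓrad' (P p y.1) δ (2*i) _ base
        intro a ha
        have h3 := hnear a ha
        have h4 : ((2*i : ℕ) : ℝ) ≤ (n : ℝ) := by exact_mod_cast h2i
        push_cast at h3 h4 ⊢
        nlinarith
      · rw [Hpow_eq_zero Γ n hlen (2*i) (by push_cast; omega)]
        exact suppP_zero _
    exact suppP_πQ Even _ _ hsup t (Finsupp.mem_support_iff.mpr h)
  · -- G ∘ F = id outside
    intro x hx
    rw [hFA x]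
    show πQ Even (G0 Γ n (Aop d Γ (ιQ Odd (πQ Odd (Aop d Γ (Finsupp.single x.1 1)))))) = _
    have hodd : SuppP (fun a => Odd a.1) (Aop d Γ (Finsupp.single x.1 1)) := by
      rw [Aop_apply]
      refine suppP_add _ _ _ ?_ ?_
      · exact suppP_Dop d Even Odd heo1 _ (suppP_single _ x.1 x.2)
      · exact suppP_Hop Γ Even Odd heo2 _ (suppP_single _ x.1 x.2)
    rw [ιQ_πQ Odd _ hodd]
    have hloc : LocOut p W δ (Finsupp.single x.1 1) :=
      suppP_single _ x.1 (fun hmem => hx (epsNbhd_mono W hδn hmem))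
    rw [sum1 d Γ p n δ W hlen hd2 hΓ _ hloc, πQ_single_of Even x.1 x.2]
  · -- F ∘ G = id outside
    intro y hy
    have hGy : ((πQ Even).comp ((G0 Γ n).comp ((Aop d Γ).comp (ιQ Odd))))
        (Finsupp.single y 1) = πQ Even (G0 Γ n (Aop d Γ (Finsupp.single y.1 1))) := by
      show πQ Even (G0 Γ n (Aop d Γ (ιQ Odd (Finsupp.single y 1)))) = _
      rw [ιQ_single]
    rw [hGy, F_all]
    have heven : SuppP (fun a => Even a.1) (G0 Γ n (Aop d Γ (Finsupp.single y.1 1))) := by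
      rw [G0_apply]
      refine suppP_sum _ _ _ (fun i hi => suppP_zsmul _ _ _ ?_)
      refine suppP_Hpow2 Γ Even (fun k ⟨r, hr⟩ => ⟨r + 1, by omega⟩) i _ ?_
      rw [Aop_apply]
      refine suppP_add _ _ _ ?_ ?_
      · exact suppP_Dop d Odd Even hoe1 _ (suppP_single _ y.1 y.2)
      · exact suppP_Hop Γ Odd Even hoe2 _ (suppP_single _ y.1 y.2)
    rw [ιQ_πQ Even _ heven]
    have hloc : LocOut p W (((n:ℝ)+1)*δ) (Finsupp.single y.1 1) :=
      suppP_single _ y.1 hy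
    rw [inv2 d Γ p n δ W hδ hlen hd2 hrad' hΓrad' hΓ _ hloc, πQ_single_of Odd y.1 y.2]
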